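/- Let (b₀,b₁,…) be a sequence of integers such that p⁽ⁿ⁾ → ∞ as n → ∞, with limit continued fraction [b*₀,b*₁,…]. Then the sequence of convergents (v*_r) of [b*₀,b*₁,…] is a subsequence of the sequence of convergents (v_n) of [b₀,b₁,…]; that is, there is a strictly increasing function k : ℕ → ℕ with v*_r = v_{k(r)} for all r. -/
import Mathlib


open Filter Topology OnePoint

/-- The Möbius map `z ↦ b - 1/z` on the one-point compactification `ℝ∞` of `ℝ`. -/
noncomputable def mob (b : ℤ) (z : OnePoint ℝ) : OnePoint ℝ :=
  Option.elim z ((b : ℝ) : OnePoint ℝ)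
    (fun x => if x = 0 then (∞ : OnePoint ℝ) else (((b : ℝ) - 1 / x : ℝ) : OnePoint ℝ))

/-- Value of a finite continued fraction `[b₀, …, b_m]`, i.e. `s₀(s₁(⋯ s_m(∞)))`. -/
noncomputable def cfVal : List ℤ → OnePoint ℝ
  | [] => ∞
  | b :: t => mob b (cfVal t)

/-- The `n`th convergent `v_n = S_n(∞)` of the continued fraction `[b₀, b₁, …]`. -/
noncomputable def cfConv (b : ℕ → ℤ) (n : ℕ) : OnePoint ℝ :=
  cfVal ((List.range (n + 1)).map b)

/-- `m` is a positive index at which the coefficient is `0`, `1` or `-1`. -/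
def badIdx (b : ℕ → ℤ) (m : ℕ) : Prop :=
  1 ≤ m ∧ (b m = 0 ∨ b m = 1 ∨ b m = -1)

instance (b : ℕ → ℤ) : DecidablePred (badIdx b) := fun m => by
  unfold badIdx; infer_instance

-- The singularization map `Φ` on integer sequences.
open Classical in
noncomputable def Phi (b : ℕ → ℤ) : ℕ → ℤ :=
  if h : ∃ m, badIdx b m then
    let m := Nat.find h
    if b m = 0 then
      fun k => if k + 1 < m then b k
        else if k = m - 1 then b (m - 1) + b (m + 1)
        else b (k + 2)
    else if b m = 1 then
      fun k => if k + 1 < m then b k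
        else if k = m - 1 then b (m - 1) - 1
        else if k = m then b (m + 1) - 1
        else b (k + 1)
    else
      fun k => if k + 1 < m then b k
        else if k = m - 1 then b (m - 1) + 1
        else if k = m then b (m + 1) + 1
        else b (k + 1)
  else b

-- `p(b) ∈ ℕ ∪ {∞}`: the least positive index at which `0`, `1` or `-1` occurs.
open Classical in
noncomputable def pIdx (b : ℕ → ℤ) : ℕ∞ :=
  if h : ∃ m, badIdx b m then (Nat.find h : ℕ∞) else ⊤

/-- `p⁽ⁿ⁾ → ∞` as `n → ∞`. -/
def PTendsToTop (b : ℕ → ℤ) : Prop :=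
  ∀ N : ℕ, ∃ M : ℕ, ∀ n ≥ M, (N : ℕ∞) < pIdx (Phi^[n] b)

/-- `p = liminf pⁿ`, as a natural number (junk value if the liminf is `∞`). -/
noncomputable def pLim (b : ℕ → ℤ) : ℕ :=
  (Filter.liminf (fun n => pIdx (Phi^[n] b)) Filter.atTop).toNat

/-- `q⁽ⁿ⁾ = |b⁽ⁿ⁾_{p-1}|`. -/
noncomputable def qSeq (b : ℕ → ℤ) (n : ℕ) : ℕ :=
  ((Phi^[n] b) (pLim b - 1)).natAbs

/-- Two continued fractions have the same tail. -/
def SameTail (b c : ℕ → ℤ) : Prop := ∃ r s : ℕ, ∀ k : ℕ, b (r + k) = c (s + k)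

/-- `bstar` is the limit continued fraction: each coefficient of `Φⁿ(b)` stabilises on it. -/
def EventuallyCoeff (b bstar : ℕ → ℤ) : Prop :=
  ∀ k : ℕ, ∃ N : ℕ, ∀ n ≥ N, Phi^[n] b k = bstar k

/-- The point of `ℝ∞` represented by the integer fraction `a/b` (`∞` when `b = 0`). -/
noncomputable def intPt (a b : ℤ) : OnePoint ℝ :=
  if b = 0 then ∞ else (((a : ℝ) / (b : ℝ)) : OnePoint ℝ)

/-- Adjacency in the Farey graph: `x = a/b`, `y = c/d` with `ad - bc = ±1`. -/
def FareyAdj (x y : OnePoint ℝ) : Prop :=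
  ∃ a b c d : ℤ, x = intPt a b ∧ y = intPt c d ∧
    (a * d - b * c = 1 ∨ a * d - b * c = -1)

/-- `x` is an extended rational, i.e. a member of `ℚ∞ = ℚ ∪ {∞} ⊆ ℝ∞`. -/
def IsExtRat (x : OnePoint ℝ) : Prop :=
  x = ∞ ∨ ∃ q : ℚ, x = ((q : ℝ) : OnePoint ℝ)

-- One step of the index-tracking sequence, for the current coefficient sequence `c`.
open Classical in
noncomputable def eStep (c : ℕ → ℤ) (e : ℕ) : Option ℕ :=
  if h : ∃ m, badIdx c m then
    let m := Nat.find h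
    if c m = 0 then
      if e + 2 ≤ m then Option.some e
      else if e = m - 1 ∨ e = m then (none : Option ℕ)
      else Option.some (e - 2)
    else
      if e + 2 ≤ m then Option.some e
      else if e = m - 1 then (none : Option ℕ)
      else Option.some (e - 1)
  else Option.some e

/-- The index-tracking sequence `e⁽⁰⁾(k), e⁽¹⁾(k), …` (`none` once it has terminated). -/
noncomputable def eSeq (b : ℕ → ℤ) (k : ℕ) : ℕ → Option ℕ
  | 0 => Option.some k
  | n + 1 => (eSeq b k n).bind (eStep (Phi^[n] b))

/-! ### Auxiliary lemmas -/

lemma mob_infty (b : ℤ) : mob b ∞ = ((b:ℝ) : OnePoint ℝ) := rfl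

lemma mob_coe (b : ℤ) (x : ℝ) : mob b ((x:ℝ) : OnePoint ℝ) =
    if x = 0 then (∞ : OnePoint ℝ) else (((b:ℝ) - 1/x : ℝ) : OnePoint ℝ) := rfl

lemma mob_add (x y : ℤ) (z : OnePoint ℝ) : mob x (mob 0 (mob y z)) = mob (x + y) z := by
  cases z with
  | infty =>
    rw [mob_infty]
    by_cases hy : (y:ℝ) = 0
    · rw [mob_coe, if_pos hy, mob_infty, mob_infty, OnePoint.coe_eq_coe]
      push_cast; linarith
    · rw [mob_coe, if_neg hy, mob_coe,
        if_neg (show ((0:ℤ):ℝ) - 1/(y:ℝ) ≠ 0 by rw [Int.cast_zero, zero_sub]; simpa using hy),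
        mob_infty, OnePoint.coe_eq_coe]
      push_cast
      rw [zero_sub, div_neg, one_div_one_div]; ring
  | coe t =>
    by_cases ht : t = 0
    · rw [mob_coe, if_pos ht, mob_infty, mob_coe,
        if_pos (show ((0:ℤ):ℝ) = 0 by norm_num), mob_coe, if_pos ht]
    · rw [mob_coe, if_neg ht]
      by_cases hu : (y:ℝ) - 1/t = 0
      · rw [mob_coe, if_pos hu, mob_infty, mob_coe, if_neg ht, OnePoint.coe_eq_coe]
        push_cast; linarith
      · rw [mob_coe, if_neg hu, mob_coe,
          if_neg (show ((0:ℤ):ℝ) - 1/((y:ℝ)-1/t) ≠ 0 by rw [Int.cast_zero, zero_sub]; simpa using hu),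
          mob_coe, if_neg ht, OnePoint.coe_eq_coe]
        push_cast
        rw [zero_sub, div_neg, one_div_one_div]; ring

private lemma raux_eq_one (c : ℝ) (hv : 1 - 1/c = 0) : c = 1 := by
  have h : 1/c = 1 := by linarith
  rw [← one_div_one_div c, h]; norm_num

private lemma raux_eq_neg_one (c : ℝ) (hv : -1 - 1/c = 0) : c = -1 := by
  have h : 1/c = -1 := by linarith
  rw [← one_div_one_div c, h]; norm_num

private lemma raux_one (a c : ℝ) (hc : c ≠ 0) (hv : 1 - 1/c ≠ 0) :
    a - 1/(1 - 1/c) = (a - 1) - 1/(c - 1) := by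
  have h1 : c - 1 ≠ 0 := by
    intro h; apply hv; rw [show c = 1 by linarith]; norm_num
  have h2 : (-1:ℝ) + c ≠ 0 := by intro h; apply h1; linarith
  have h3 : ((-1:ℝ) + c)⁻¹ * (-1 + c) = 1 := inv_mul_cancel₀ h2
  field_simp
  ring

private lemma raux_neg_one (a c : ℝ) (hc : c ≠ 0) (hv : -1 - 1/c ≠ 0) :
    a - 1/(-1 - 1/c) = (a + 1) - 1/(c + 1) := by
  have h1 : c + 1 ≠ 0 := by
    intro h; apply hv; rw [show c = -1 by linarith]; norm_num
  have h2 : (-1:ℝ) - c ≠ 0 := by intro h; apply h1; linarith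
  have h3 : ((-1:ℝ) - c)⁻¹ * (-1 - c) = 1 := inv_mul_cancel₀ h2
  field_simp
  linear_combination c * h3

lemma mob_one (x y : ℤ) (z : OnePoint ℝ) :
    mob x (mob 1 (mob y z)) = mob (x - 1) (mob (y - 1) z) := by
  cases z with
  | infty =>
    by_cases hy : (y:ℝ) = 0
    · have hy1 : ((y-1:ℤ):ℝ) ≠ 0 := by push_cast; rw [hy]; norm_num
      simp only [mob_infty, mob_coe, hy, hy1, if_true, if_false, eq_self_iff_true,
        not_false_iff, if_pos, if_neg]
      rw [OnePoint.coe_eq_coe]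
      push_cast
      rw [hy]; norm_num
    · by_cases hv : ((1:ℤ):ℝ) - 1/(y:ℝ) = 0
      · have hy1 : ((y-1:ℤ):ℝ) = 0 := by
          push_cast at hv ⊢
          have := raux_eq_one _ hv; linarith
        simp only [mob_infty, mob_coe, hy, hv, hy1, if_true, if_false, eq_self_iff_true,
          not_false_iff, if_pos, if_neg]
      · have hy1 : ((y-1:ℤ):ℝ) ≠ 0 := by
          push_cast at hv ⊢; intro hh
          apply hv; rw [show (y:ℝ) = 1 by linarith]; norm_num
        simp only [mob_infty, mob_coe, hy, hv, hy1, if_true, if_false, eq_self_iff_true,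
          not_false_iff, if_pos, if_neg]
        rw [OnePoint.coe_eq_coe]
        push_cast at hv ⊢
        rw [raux_one _ _ hy hv]
  | coe t =>
    by_cases ht : t = 0
    · simp only [mob_infty, mob_coe, ht, if_true, if_false, eq_self_iff_true,
        not_false_iff, if_pos, if_neg]
      rw [if_neg (show ((1:ℤ):ℝ) ≠ 0 by norm_num), OnePoint.coe_eq_coe]
      push_cast; ring
    · by_cases hu : (y:ℝ) - 1/t = 0
      · have hw : ((y-1:ℤ):ℝ) - 1/t ≠ 0 := by
          push_cast; intro hh; rw [show (1:ℝ)/t = (y:ℝ) by linarith] at hh; norm_num at hh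
        simp only [mob_infty, mob_coe, ht, hu, hw, if_true, if_false, eq_self_iff_true,
          not_false_iff, if_pos, if_neg]
        rw [OnePoint.coe_eq_coe]
        push_cast
        rw [show (y:ℝ) - 1 - 1/t = -1 by linarith]; norm_num
      · by_cases hv : ((1:ℤ):ℝ) - 1/((y:ℝ) - 1/t) = 0
        · have hw : ((y-1:ℤ):ℝ) - 1/t = 0 := by
            push_cast at hv ⊢
            have := raux_eq_one _ hv; linarith
          simp only [mob_infty, mob_coe, ht, hu, hv, hw, if_true, if_false, eq_self_iff_true,
            not_false_iff, if_pos, if_neg]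
        · have hw : ((y-1:ℤ):ℝ) - 1/t ≠ 0 := by
            push_cast at hv ⊢; intro hh
            apply hv; rw [show (y:ℝ) - 1/t = 1 by linarith]; norm_num
          simp only [mob_infty, mob_coe, ht, hu, hv, hw, if_true, if_false, eq_self_iff_true,
            not_false_iff, if_pos, if_neg]
          rw [OnePoint.coe_eq_coe]
          push_cast at hv ⊢
          rw [raux_one _ _ hu hv]; ring

lemma mob_neg_one (x y : ℤ) (z : OnePoint ℝ) :
    mob x (mob (-1) (mob y z)) = mob (x + 1) (mob (y + 1) z) := by
  cases z with
  | infty =>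
    by_cases hy : (y:ℝ) = 0
    · have hy1 : ((y+1:ℤ):ℝ) ≠ 0 := by push_cast; rw [hy]; norm_num
      simp only [mob_infty, mob_coe, hy, hy1, if_true, if_false, eq_self_iff_true,
        not_false_iff, if_pos, if_neg]
      rw [OnePoint.coe_eq_coe]
      push_cast
      rw [hy]; norm_num
    · by_cases hv : ((-1:ℤ):ℝ) - 1/(y:ℝ) = 0
      · have hy1 : ((y+1:ℤ):ℝ) = 0 := by
          push_cast at hv ⊢
          have := raux_eq_neg_one (y:ℝ) (by linarith); linarith
        simp only [mob_infty, mob_coe, hy, hv, hy1, if_true, if_false, eq_self_iff_true,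
          not_false_iff, if_pos, if_neg]
      · have hy1 : ((y+1:ℤ):ℝ) ≠ 0 := by
          push_cast at hv ⊢; intro hh
          apply hv; rw [show (y:ℝ) = -1 by linarith]; norm_num
        simp only [mob_infty, mob_coe, hy, hv, hy1, if_true, if_false, eq_self_iff_true,
          not_false_iff, if_pos, if_neg]
        rw [OnePoint.coe_eq_coe]
        push_cast at hv ⊢
        rw [raux_neg_one _ _ hy hv]
  | coe t =>
    by_cases ht : t = 0
    · simp only [mob_infty, mob_coe, ht, if_true, if_false, eq_self_iff_true,
        not_false_iff, if_pos, if_neg]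
      rw [if_neg (show ((-1:ℤ):ℝ) ≠ 0 by norm_num), OnePoint.coe_eq_coe]
      push_cast; ring
    · by_cases hu : (y:ℝ) - 1/t = 0
      · have hw : ((y+1:ℤ):ℝ) - 1/t ≠ 0 := by
          push_cast; intro hh; rw [show (1:ℝ)/t = (y:ℝ) by linarith] at hh; norm_num at hh
        simp only [mob_infty, mob_coe, ht, hu, hw, if_true, if_false, eq_self_iff_true,
          not_false_iff, if_pos, if_neg]
        rw [OnePoint.coe_eq_coe]
        push_cast
        rw [show (y:ℝ) + 1 - 1/t = 1 by linarith]; norm_num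
      · by_cases hv : ((-1:ℤ):ℝ) - 1/((y:ℝ) - 1/t) = 0
        · have hw : ((y+1:ℤ):ℝ) - 1/t = 0 := by
            push_cast at hv ⊢
            have := raux_eq_neg_one ((y:ℝ) - 1/t) (by linarith); linarith
          simp only [mob_infty, mob_coe, ht, hu, hv, hw, if_true, if_false, eq_self_iff_true,
            not_false_iff, if_pos, if_neg]
        · have hw : ((y+1:ℤ):ℝ) - 1/t ≠ 0 := by
            push_cast at hv ⊢; intro hh
            apply hv; rw [show (y:ℝ) - 1/t = -1 by linarith]; norm_num
          simp only [mob_infty, mob_coe, ht, hu, hv, hw, if_true, if_false, eq_self_iff_true,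
            not_false_iff, if_pos, if_neg]
          rw [OnePoint.coe_eq_coe]
          push_cast at hv ⊢
          rw [raux_neg_one _ _ hu hv]; ring

lemma mob_one_infty (x : ℤ) : mob x (mob 1 ∞) = mob (x - 1) ∞ := by
  rw [mob_infty, mob_coe, if_neg (show ((1:ℤ):ℝ) ≠ 0 by norm_num), mob_infty,
    OnePoint.coe_eq_coe]
  push_cast; ring

lemma mob_neg_one_infty (x : ℤ) : mob x (mob (-1) ∞) = mob (x + 1) ∞ := by
  rw [mob_infty, mob_coe, if_neg (show ((-1:ℤ):ℝ) ≠ 0 by norm_num), mob_infty,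
    OnePoint.coe_eq_coe]
  push_cast; ring

/-! ### Coefficient lemmas for `Phi` -/

lemma Phi_of_lt {b : ℕ → ℤ} (h : ∃ m, badIdx b m) {k : ℕ} (hk : k + 1 < Nat.find h) :
    Phi b k = b k := by
  unfold Phi
  rw [dif_pos h]
  split_ifs <;> (beta_reduce; split_ifs <;> first | rfl | omega)

lemma Phi_at0 {b : ℕ → ℤ} (h : ∃ m, badIdx b m) {a : ℕ} (ham : Nat.find h = a + 1)
    (h0 : b (Nat.find h) = 0) : Phi b a = b a + b (a + 2) := by
  unfold Phi
  rw [dif_pos h]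
  simp only [ham] at h0 ⊢
  rw [if_pos h0]
  beta_reduce
  rw [if_neg (by omega), if_pos (by omega), show a + 1 - 1 = a by omega,
    show a + 1 + 1 = a + 2 by omega]

lemma Phi_ge0 {b : ℕ → ℤ} (h : ∃ m, badIdx b m) {k : ℕ} (hk : Nat.find h ≤ k)
    (h0 : b (Nat.find h) = 0) : Phi b k = b (k + 2) := by
  have hm1 : 1 ≤ Nat.find h := (Nat.find_spec h).1
  unfold Phi
  rw [dif_pos h, if_pos h0]
  beta_reduce
  rw [if_neg (by omega), if_neg (by omega)]

lemma Phi_at1 {b : ℕ → ℤ} (h : ∃ m, badIdx b m) {a : ℕ} (ham : Nat.find h = a + 1)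
    (h1 : b (Nat.find h) = 1) : Phi b a = b a - 1 := by
  unfold Phi
  rw [dif_pos h]
  simp only [ham] at h1 ⊢
  rw [if_neg (by rw [h1]; norm_num), if_pos h1]
  beta_reduce
  rw [if_neg (by omega), if_pos (by omega), show a + 1 - 1 = a by omega]

lemma Phi_mid1 {b : ℕ → ℤ} (h : ∃ m, badIdx b m) {a : ℕ} (ham : Nat.find h = a + 1)
    (h1 : b (Nat.find h) = 1) : Phi b (a + 1) = b (a + 2) - 1 := by
  unfold Phi
  rw [dif_pos h]
  simp only [ham] at h1 ⊢
  rw [if_neg (by rw [h1]; norm_num), if_pos h1]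
  beta_reduce
  rw [if_neg (by omega), if_neg (by omega), if_pos rfl, show a + 1 + 1 = a + 2 by omega]

lemma Phi_gt1 {b : ℕ → ℤ} (h : ∃ m, badIdx b m) {a k : ℕ} (ham : Nat.find h = a + 1)
    (h1 : b (Nat.find h) = 1) (hk : a + 2 ≤ k) : Phi b k = b (k + 1) := by
  unfold Phi
  rw [dif_pos h]
  simp only [ham] at h1 ⊢
  rw [if_neg (by rw [h1]; norm_num), if_pos h1]
  beta_reduce
  rw [if_neg (by omega), if_neg (by omega), if_neg (by omega)]

lemma Phi_at2 {b : ℕ → ℤ} (h : ∃ m, badIdx b m) {a : ℕ} (ham : Nat.find h = a + 1)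
    (h2 : b (Nat.find h) = -1) : Phi b a = b a + 1 := by
  unfold Phi
  rw [dif_pos h]
  simp only [ham] at h2 ⊢
  rw [if_neg (by rw [h2]; norm_num), if_neg (by rw [h2]; norm_num)]
  beta_reduce
  rw [if_neg (by omega), if_pos (by omega), show a + 1 - 1 = a by omega]

lemma Phi_mid2 {b : ℕ → ℤ} (h : ∃ m, badIdx b m) {a : ℕ} (ham : Nat.find h = a + 1)
    (h2 : b (Nat.find h) = -1) : Phi b (a + 1) = b (a + 2) + 1 := by
  unfold Phi
  rw [dif_pos h]
  simp only [ham] at h2 ⊢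
  rw [if_neg (by rw [h2]; norm_num), if_neg (by rw [h2]; norm_num)]
  beta_reduce
  rw [if_neg (by omega), if_neg (by omega), if_pos rfl, show a + 1 + 1 = a + 2 by omega]

lemma Phi_gt2 {b : ℕ → ℤ} (h : ∃ m, badIdx b m) {a k : ℕ} (ham : Nat.find h = a + 1)
    (h2 : b (Nat.find h) = -1) (hk : a + 2 ≤ k) : Phi b k = b (k + 1) := by
  unfold Phi
  rw [dif_pos h]
  simp only [ham] at h2 ⊢
  rw [if_neg (by rw [h2]; norm_num), if_neg (by rw [h2]; norm_num)]
  beta_reduce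
  rw [if_neg (by omega), if_neg (by omega), if_neg (by omega)]

/-! ### List-level lemmas -/

lemma cfVal_cons (a : ℤ) (t : List ℤ) : cfVal (a :: t) = mob a (cfVal t) := rfl

lemma cfVal_append (A T : List ℤ) : cfVal (A ++ T) = A.foldr mob (cfVal T) := by
  induction A with
  | nil => rfl
  | cons a A ih => simp only [List.cons_append, cfVal_cons, ih, List.foldr_cons]

lemma map_range_add (f : ℕ → ℤ) (a t : ℕ) :
    (List.range (a + t)).map f
      = (List.range a).map f ++ (List.range t).map (fun i => f (a + i)) := by
  rw [List.range_add, List.map_append, List.map_map]; rfl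

lemma cfConv_congr {f g : ℕ → ℤ} (n : ℕ) (h : ∀ k ≤ n, f k = g k) :
    cfConv f n = cfConv g n := by
  unfold cfConv
  congr 1
  exact List.map_congr_left fun k hk =>
    h k (Nat.lt_succ_iff.mp (List.mem_range.mp hk))

/-! ### The index jump function -/

open Classical in
noncomputable def Jf (b : ℕ → ℤ) (n : ℕ) : ℕ :=
  if h : ∃ m, badIdx b m then
    if n + 2 ≤ Nat.find h then n
    else if b (Nat.find h) = 0 then n + 2 else n + 1
  else n

lemma Jf_strictMono (b : ℕ → ℤ) : StrictMono (Jf b) := by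
  intro p q hpq
  unfold Jf
  split_ifs <;> omega

lemma Jf_fix {b : ℕ → ℤ} {n : ℕ} (hn : ((n + 1 : ℕ) : ℕ∞) < pIdx b) : Jf b n = n := by
  unfold Jf
  by_cases h1 : ∃ m, badIdx b m
  · unfold pIdx at hn
    rw [dif_pos h1] at hn
    have : n + 1 < Nat.find h1 := by exact_mod_cast hn
    rw [dif_pos h1, if_pos (by omega)]
  · rw [dif_neg h1]

lemma cfConv_phi (b : ℕ → ℤ) (n : ℕ) : cfConv (Phi b) n = cfConv b (Jf b n) := by
  by_cases h : ∃ m, badIdx b m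
  · have hm1 : 1 ≤ Nat.find h := (Nat.find_spec h).1
    obtain ⟨a, ham⟩ : ∃ a, Nat.find h = a + 1 := ⟨Nat.find h - 1, by omega⟩
    have hpre : (List.range a).map (Phi b) = (List.range a).map b :=
      List.map_congr_left fun k hk =>
        Phi_of_lt h (by have := List.mem_range.mp hk; omega)
    by_cases hn : n + 2 ≤ Nat.find h
    · have hJ : Jf b n = n := by unfold Jf; rw [dif_pos h, if_pos hn]
      rw [hJ]
      exact cfConv_congr n fun k hk => Phi_of_lt h (by omega)
    · push_neg at hn
      have han : a ≤ n := by omega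
      rcases (Nat.find_spec h).2 with h0 | h1 | h2
      · -- `b m = 0`
        have hJ : Jf b n = n + 2 := by
          unfold Jf; rw [dif_pos h, if_neg (by omega), if_pos h0]
        rw [hJ]
        obtain ⟨s, hs⟩ : ∃ s, n + 1 = (a + 1) + s := ⟨n - a, by omega⟩
        have h0' : b (a + 1) = 0 := by rw [← ham]; exact h0
        have L1 : (List.range (n + 1)).map (Phi b)
            = (List.range a).map b
              ++ ((b a + b (a + 2)) :: (List.range s).map (fun i => b (a + 3 + i))) := by
          rw [hs, map_range_add, List.range_succ, List.map_append, hpre, List.append_assoc]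
          congr 1
          rw [List.map_cons, List.map_nil, List.singleton_append, Phi_at0 h ham h0]
          congr 1
          exact List.map_congr_left fun i _ => by
            rw [Phi_ge0 h (by omega) h0, show a + 1 + i + 2 = a + 3 + i by omega]
        have L2 : (List.range (n + 2 + 1)).map b
            = (List.range a).map b
              ++ (b a :: b (a + 1) :: b (a + 2) :: (List.range s).map (fun i => b (a + 3 + i))) := by
          rw [show n + 2 + 1 = (a + 3) + s by omega, map_range_add,
            show a + 3 = (a + 2) + 1 by omega, List.range_succ,
            show a + 2 = (a + 1) + 1 by omega, List.range_succ, List.range_succ]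
          simp only [List.map_append, List.map_cons, List.map_nil, List.append_assoc,
            List.cons_append, List.nil_append]
        unfold cfConv
        rw [L1, L2, cfVal_append, cfVal_append]
        congr 1
        rw [cfVal_cons, cfVal_cons, cfVal_cons, cfVal_cons, h0']
        exact (mob_add (b a) (b (a + 2)) _).symm
      · -- `b m = 1`
        have hJ : Jf b n = n + 1 := by
          unfold Jf; rw [dif_pos h, if_neg (by omega), if_neg (by rw [h1]; norm_num)]
        rw [hJ]
        have h1' : b (a + 1) = 1 := by rw [← ham]; exact h1
        rcases Nat.lt_or_ge n (a + 1) with hlt | hge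
        · have hn_eq : n = a := by omega
          subst hn_eq
          have L1 : (List.range (n + 1)).map (Phi b)
              = (List.range n).map b ++ [b n - 1] := by
            rw [List.range_succ, List.map_append, hpre, List.map_cons, List.map_nil,
              Phi_at1 h ham h1]
          have L2 : (List.range (n + 1 + 1)).map b
              = (List.range n).map b ++ [b n, b (n + 1)] := by
            rw [List.range_succ, List.range_succ]
            simp only [List.map_append, List.map_cons, List.map_nil, List.append_assoc,
              List.cons_append, List.nil_append]
          unfold cfConv
          rw [L1, L2, cfVal_append, cfVal_append]
          congr 1
          rw [h1']
          exact (mob_one_infty (b n)).symm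
        · obtain ⟨s, hs⟩ : ∃ s, n + 1 = (a + 2) + s := ⟨n - a - 1, by omega⟩
          have L1 : (List.range (n + 1)).map (Phi b)
              = (List.range a).map b
                ++ ((b a - 1) :: (b (a + 2) - 1) :: (List.range s).map (fun i => b (a + 3 + i))) := by
            rw [hs, map_range_add, show a + 2 = (a + 1) + 1 by omega, List.range_succ,
              List.range_succ]
            simp only [List.map_append, List.map_cons, List.map_nil, List.append_assoc,
              List.cons_append, List.nil_append]
            rw [hpre]
            congr 1
            rw [Phi_at1 h ham h1]
            congr 1
            rw [Phi_mid1 h ham h1]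
            congr 1
            exact List.map_congr_left fun i _ => by
              rw [Phi_gt1 h ham h1 (by omega), show (a + 1) + 1 + i + 1 = a + 3 + i by omega]
          have L2 : (List.range (n + 1 + 1)).map b
              = (List.range a).map b
                ++ (b a :: b (a + 1) :: b (a + 2) :: (List.range s).map (fun i => b (a + 3 + i))) := by
            rw [show n + 1 + 1 = (a + 3) + s by omega, map_range_add,
              show a + 3 = (a + 2) + 1 by omega, List.range_succ,
              show a + 2 = (a + 1) + 1 by omega, List.range_succ, List.range_succ]
            simp only [List.map_append, List.map_cons, List.map_nil, List.append_assoc,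
              List.cons_append, List.nil_append]
          unfold cfConv
          rw [L1, L2, cfVal_append, cfVal_append]
          congr 1
          rw [cfVal_cons, cfVal_cons, cfVal_cons, cfVal_cons, cfVal_cons, h1']
          exact (mob_one (b a) (b (a + 2)) _).symm
      · -- `b m = -1`
        have hJ : Jf b n = n + 1 := by
          unfold Jf; rw [dif_pos h, if_neg (by omega), if_neg (by rw [h2]; norm_num)]
        rw [hJ]
        have h2' : b (a + 1) = -1 := by rw [← ham]; exact h2
        rcases Nat.lt_or_ge n (a + 1) with hlt | hge
        · have hn_eq : n = a := by omega
          subst hn_eq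
          have L1 : (List.range (n + 1)).map (Phi b)
              = (List.range n).map b ++ [b n + 1] := by
            rw [List.range_succ, List.map_append, hpre, List.map_cons, List.map_nil,
              Phi_at2 h ham h2]
          have L2 : (List.range (n + 1 + 1)).map b
              = (List.range n).map b ++ [b n, b (n + 1)] := by
            rw [List.range_succ, List.range_succ]
            simp only [List.map_append, List.map_cons, List.map_nil, List.append_assoc,
              List.cons_append, List.nil_append]
          unfold cfConv
          rw [L1, L2, cfVal_append, cfVal_append]
          congr 1
          rw [h2']
          exact (mob_neg_one_infty (b n)).symm
        · obtain ⟨s, hs⟩ : ∃ s, n + 1 = (a + 2) + s := ⟨n - a - 1, by omega⟩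
          have L1 : (List.range (n + 1)).map (Phi b)
              = (List.range a).map b
                ++ ((b a + 1) :: (b (a + 2) + 1) :: (List.range s).map (fun i => b (a + 3 + i))) := by
            rw [hs, map_range_add, show a + 2 = (a + 1) + 1 by omega, List.range_succ,
              List.range_succ]
            simp only [List.map_append, List.map_cons, List.map_nil, List.append_assoc,
              List.cons_append, List.nil_append]
            rw [hpre]
            congr 1
            rw [Phi_at2 h ham h2]
            congr 1
            rw [Phi_mid2 h ham h2]
            congr 1
            exact List.map_congr_left fun i _ => by
              rw [Phi_gt2 h ham h2 (by omega), show (a + 1) + 1 + i + 1 = a + 3 + i by omega]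
          have L2 : (List.range (n + 1 + 1)).map b
              = (List.range a).map b
                ++ (b a :: b (a + 1) :: b (a + 2) :: (List.range s).map (fun i => b (a + 3 + i))) := by
            rw [show n + 1 + 1 = (a + 3) + s by omega, map_range_add,
              show a + 3 = (a + 2) + 1 by omega, List.range_succ,
              show a + 2 = (a + 1) + 1 by omega, List.range_succ, List.range_succ]
            simp only [List.map_append, List.map_cons, List.map_nil, List.append_assoc,
              List.cons_append, List.nil_append]
          unfold cfConv
          rw [L1, L2, cfVal_append, cfVal_append]
          congr 1
          rw [cfVal_cons, cfVal_cons, cfVal_cons, cfVal_cons, cfVal_cons, h2']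
          exact (mob_neg_one (b a) (b (a + 2)) _).symm
  · have hP : Phi b = b := by unfold Phi; rw [dif_neg h]
    have hJ : Jf b n = n := by unfold Jf; rw [dif_neg h]
    rw [hP, hJ]

noncomputable def Jcomp (b : ℕ → ℤ) : ℕ → ℕ → ℕ
  | 0, n => n
  | N + 1, n => Jcomp b N (Jf (Phi^[N] b) n)

lemma cfConv_iter (b : ℕ → ℤ) (N n : ℕ) :
    cfConv (Phi^[N] b) n = cfConv b (Jcomp b N n) := by
  induction N generalizing n with
  | zero => rfl
  | succ N ih =>
      rw [Function.iterate_succ_apply', cfConv_phi (Phi^[N] b) n, Jcomp]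
      exact ih _

lemma Jcomp_strictMono (b : ℕ → ℤ) (N : ℕ) : StrictMono (Jcomp b N) := by
  induction N with
  | zero => exact fun p q hpq => hpq
  | succ N ih => exact fun p q hpq => ih (Jf_strictMono _ hpq)

lemma Jcomp_stable (b : ℕ → ℤ) (r M N : ℕ) (hMN : M ≤ N)
    (hstab : ∀ n, M ≤ n → ((r + 1 : ℕ) : ℕ∞) < pIdx (Phi^[n] b)) :
    Jcomp b N r = Jcomp b M r := by
  induction N, hMN using Nat.le_induction with
  | base => rfl
  | succ N hN ih =>
      rw [Jcomp, Jf_fix (hstab N hN)]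
      exact ih

/-- **Lemma 6.** If `p⁽ⁿ⁾ → ∞`, then the sequence of convergents of the limit continued
fraction `[b₀*, b₁*, …]` is a subsequence of the sequence of convergents of `[b₀, b₁, …]`. -/
theorem stmt15 (b bstar : ℕ → ℤ) (hp : PTendsToTop b) (hb : EventuallyCoeff b bstar) :
    ∃ k : ℕ → ℕ, StrictMono k ∧ ∀ r : ℕ, cfConv bstar r = cfConv b (k r) := by
  classical
  choose M hM using hp
  choose Nc hNc using hb
  refine ⟨fun r => Jcomp b (M (r + 1)) r, ?_, ?_⟩
  · apply strictMono_nat_of_lt_succ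
    intro r
    have k1 : Jcomp b (max (M (r + 1)) (M (r + 1 + 1))) r = Jcomp b (M (r + 1)) r :=
      Jcomp_stable b r (M (r + 1)) _ (le_max_left _ _) (fun n hn => hM (r + 1) n hn)
    have k2 : Jcomp b (max (M (r + 1)) (M (r + 1 + 1))) (r + 1)
        = Jcomp b (M (r + 1 + 1)) (r + 1) :=
      Jcomp_stable b (r + 1) (M (r + 1 + 1)) _ (le_max_right _ _)
        (fun n hn => hM (r + 1 + 1) n hn)
    calc Jcomp b (M (r + 1)) r
        = Jcomp b (max (M (r + 1)) (M (r + 1 + 1))) r := k1.symm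
      _ < Jcomp b (max (M (r + 1)) (M (r + 1 + 1))) (r + 1) :=
          Jcomp_strictMono b _ (lt_add_one r)
      _ = Jcomp b (M (r + 1 + 1)) (r + 1) := k2
  · intro r
    set N := max (M (r + 1)) ((Finset.range (r + 1)).sup Nc) with hN
    have h1 : cfConv bstar r = cfConv (Phi^[N] b) r := by
      refine (cfConv_congr r fun j hj => ?_).symm
      refine hNc j N ?_
      exact le_trans (Finset.le_sup (Finset.mem_range.mpr (by omega))) (le_max_right _ _)
    have h2 : Jcomp b N r = Jcomp b (M (r + 1)) r :=
      Jcomp_stable b r (M (r + 1)) N (le_max_left _ _) (fun n hn => hM (r + 1) n hn)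
    rw [h1, cfConv_iter, h2]
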